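/- (Closedness of the subfunctor E^L_N.) Let A ⟶f B ⟶g C ⟶h A⟦1⟧ and B ⟶b B' ⟶b' B'' ⟶b'' B⟦1⟧ be distinguished triangles in C, and assume that both h: C ⟶ A⟦1⟧ and b'': B'' ⟶ B⟦1⟧ satisfy condition (Lex). Then for any distinguished triangle A ⟶(b∘f) B' ⟶y C' ⟶z A⟦1⟧ completing the composite b ∘ f, the morphism z: C' ⟶ A⟦1⟧ also satisfies condition (Lex). -/

import Mathlib

open CategoryTheory CategoryTheory.Limits CategoryTheory.Pretriangulated

universe v u v₂ u₂

variable {C : Type u} [Category.{v} C] [Preadditive C] [HasZeroObject C]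
  [HasShift C ℤ] [∀ n : ℤ, (shiftFunctor C n).Additive] [Pretriangulated C]

/-- `f : X ⟶ Y` factors through an object of `N`. -/
def FactorsThru (N : Set C) {X Y : C} (f : X ⟶ Y) : Prop :=
  ∃ (Z : C) (_ : Z ∈ N) (u : X ⟶ Z) (v : Z ⟶ Y), f = u ≫ v

/-- The morphism `X⟦-1⟧ ⟶ A` obtained from `h : X ⟶ A⟦1⟧` by shifting by `-1` and
composing with the canonical isomorphism `A⟦1⟧⟦-1⟧ ≅ A`. -/
noncomputable def descShift {X A : C} (h : X ⟶ A⟦(1:ℤ)⟧) : X⟦(-1:ℤ)⟧ ⟶ A :=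
  h⟦(-1:ℤ)⟧' ≫ (shiftEquiv C (1:ℤ)).unitIso.inv.app A

/-- The class `S_N` of morphisms fitting in a distinguished triangle whose two other
maps factor through `N`. -/
def SN (N : Set C) {B C₀ : C} (g : B ⟶ C₀) : Prop :=
  ∃ (A : C) (f : A ⟶ B) (h : C₀ ⟶ A⟦(1:ℤ)⟧),
    (Triangle.mk f g h ∈ distTriang C) ∧ FactorsThru N f ∧ FactorsThru N h

/-- The class `L`. -/
def ClassL (N : Set C) {A B : C} (f : A ⟶ B) : Prop :=
  ∃ (N₀ : C) (_ : N₀ ∈ N) (g : B ⟶ N₀) (h : N₀ ⟶ A⟦(1:ℤ)⟧),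
    (Triangle.mk f g h ∈ distTriang C) ∧ FactorsThru N (descShift h)

/-- The class `R`. -/
def ClassR (N : Set C) {B C₀ : C} (g : B ⟶ C₀) : Prop :=
  ∃ (N₀ : C) (_ : N₀ ∈ N) (f : N₀ ⟶ B) (h : C₀ ⟶ N₀⟦(1:ℤ)⟧),
    (Triangle.mk f g h ∈ distTriang C) ∧ FactorsThru N h

/-- Condition (Lex) on a morphism `h : C₀ ⟶ A⟦1⟧`. -/
def LexCond (N : Set C) {C₀ A : C} (h : C₀ ⟶ A⟦(1:ℤ)⟧) : Prop :=
  ∀ (N₀ : C), N₀ ∈ N → ∀ (x : N₀ ⟶ C₀), FactorsThru N (descShift (x ≫ h))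

/-- Condition (Rex) on a morphism `h : C₀ ⟶ A⟦1⟧`. -/
def RexCond (N : Set C) {C₀ A : C} (h : C₀ ⟶ A⟦(1:ℤ)⟧) : Prop :=
  ∀ (N₀ : C), N₀ ∈ N → ∀ (y : A ⟶ N₀),
    ∃ (M : C) (_ : M ∈ N) (u : C₀⟦(-1:ℤ)⟧ ⟶ M⟦(-1:ℤ)⟧) (v : M⟦(-1:ℤ)⟧ ⟶ N₀),
      descShift h ≫ y = u ≫ v

/-- `S_N` as a morphism property. -/
def SNProp (N : Set C) : MorphismProperty C := fun _ _ g => SN N g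

/-!
Through the adjunction `⟦-1⟧ ⊣ ⟦1⟧`, condition (Lex) for `h` says that `x ≫ h` factors
through `N⟦1⟧` for every `x` with source in `N`. Given `x : N₀ ⟶ C'`, the morphism of triangles
`(f, 𝟙)` gives `d : C' ⟶ B''` with `z ≫ f⟦1⟧' = d ≫ b''`, and (Lex) for `b''` factors
`x ≫ d ≫ b''` through some `u : N₀ ⟶ Q⟦1⟧` with `Q ∈ N`. In a triangle `Q ⟶ G ⟶ N₀ ⟶ Q⟦1⟧`
on `u` we have `G ∈ N`, and `f⟦1⟧'` kills `j ≫ x ≫ z` for `j : G ⟶ N₀`, so this composite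
factors through `h` and (Lex) for `h` applies to it. A homotopy pushout along the factorization
then carries it over to `x ≫ z`, because the fibre `Q` of `j` lies in `N`.
-/

omit [Preadditive C] [HasZeroObject C] [∀ n : ℤ, (shiftFunctor C n).Additive]
  [Pretriangulated C] in
lemma factorsThru_descShift_iff (N : Set C) {X A : C} (k : X ⟶ A⟦(1:ℤ)⟧) :
    FactorsThru N (descShift k) ↔ FactorsThru ((shiftFunctor C (1:ℤ)).obj '' N) k := by
  let adj := (shiftEquiv C (1:ℤ)).symm.toAdjunction
  have hdesc : ∀ {Y : C} (k : X ⟶ Y⟦(1:ℤ)⟧), descShift k = (adj.homEquiv X Y).symm k :=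
    fun _ => rfl
  constructor
  · rintro ⟨Q, hQ, u, v, huv⟩
    refine ⟨Q⟦(1:ℤ)⟧, ⟨Q, hQ, rfl⟩, adj.homEquiv _ _ u, v⟦(1:ℤ)⟧', ?_⟩
    rw [hdesc] at huv
    exact ((Equiv.symm_apply_eq _).1 huv).trans (adj.homEquiv_naturality_right u v)
  · rintro ⟨_, ⟨Q, hQ, rfl⟩, u, v, rfl⟩
    refine ⟨Q, hQ, descShift u, (shiftFunctor C (1:ℤ)).preimage v, ?_⟩
    conv_lhs => rw [← (shiftFunctor C (1:ℤ)).map_preimage v]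
    exact adj.homEquiv_naturality_right_symm _ _

omit [Preadditive C] [HasZeroObject C] [∀ n : ℤ, (shiftFunctor C n).Additive]
  [Pretriangulated C] in
lemma lexCond_iff_factorsThru_shift (N : Set C) {C₀ A : C} (h : C₀ ⟶ A⟦(1:ℤ)⟧) :
    LexCond N h ↔ ∀ N₀ ∈ N, ∀ x : N₀ ⟶ C₀,
      FactorsThru ((shiftFunctor C (1:ℤ)).obj '' N) (x ≫ h) := by
  simp only [LexCond, factorsThru_descShift_iff]

lemma factorsThru_shift_of_factorsThru_mor₂_comp (N : Set C)
    (hNext : ∀ T ∈ distTriang C, T.obj₁ ∈ N → T.obj₃ ∈ N → T.obj₂ ∈ N)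
    (T : Triangle C) (hT : T ∈ distTriang C) (hT₁ : T.obj₁ ∈ N) {A : C} (ψ : T.obj₃ ⟶ A)
    (hψ : FactorsThru ((shiftFunctor C (1:ℤ)).obj '' N) (T.mor₂ ≫ ψ)) :
    FactorsThru ((shiftFunctor C (1:ℤ)).obj '' N) ψ := by
  obtain ⟨_, ⟨P, hP, rfl⟩, p, q, hpq⟩ := hψ
  -- `W⟦1⟧` is the homotopy pushout of `T.mor₁` and `p`.
  obtain ⟨W, i, j, hS⟩ := distinguished_cocone_triangle₂ (T.mor₁ ≫ p)
  have hW : W ∈ N := hNext _ hS hP hT₁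
  have hS' : Triangle.mk (T.mor₁ ≫ p) (-i⟦(1:ℤ)⟧') (-j⟦(1:ℤ)⟧') ∈ distTriang C :=
    rot_of_distTriang _ (rot_of_distTriang _ hS)
  obtain ⟨ρ, hρ₂, hρ₃⟩ : ∃ ρ : T.obj₃ ⟶ W⟦(1:ℤ)⟧,
      T.mor₂ ≫ ρ = p ≫ (-i⟦(1:ℤ)⟧') ∧ T.mor₃ = ρ ≫ (-j⟦(1:ℤ)⟧') := by
    obtain ⟨ρ, hρ₂, hρ₃⟩ := complete_distinguished_triangle_morphism _ _ hT hS' (𝟙 _) p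
      (Category.id_comp _).symm
    refine ⟨ρ, hρ₂, ?_⟩
    rw [← Category.comp_id T.mor₃, ← (shiftFunctor C (1:ℤ)).map_id]
    exact hρ₃
  obtain ⟨ψ', hψ'⟩ : ∃ ψ' : W⟦(1:ℤ)⟧ ⟶ A, q = (-i⟦(1:ℤ)⟧') ≫ ψ' :=
    Triangle.yoneda_exact₂ _ hS' q (by
      change (T.mor₁ ≫ p) ≫ q = 0
      rw [Category.assoc, ← hpq, ← Category.assoc, comp_distTriang_mor_zero₁₂ _ hT, zero_comp])
  obtain ⟨ω, hω⟩ := Triangle.yoneda_exact₃ T hT (ψ - ρ ≫ ψ') (by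
    rw [Preadditive.comp_sub, hpq, hψ', reassoc_of% hρ₂, sub_self])
  refine ⟨W⟦(1:ℤ)⟧, ⟨W, hW, rfl⟩, ρ, ψ' + (-j⟦(1:ℤ)⟧') ≫ ω, ?_⟩
  rw [Preadditive.comp_add, ← Category.assoc, ← hρ₃, ← hω, add_sub_cancel]

theorem stmt15 (N : Set C)
    (hNext : ∀ (T : Triangle C), (T ∈ distTriang C) → T.obj₁ ∈ N → T.obj₃ ∈ N → T.obj₂ ∈ N)
    {A B B' B'' C₀ : C} (f : A ⟶ B) (g : B ⟶ C₀) (h : C₀ ⟶ A⟦(1:ℤ)⟧)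
    (b : B ⟶ B') (b' : B' ⟶ B'') (b'' : B'' ⟶ B⟦(1:ℤ)⟧)
    (hT1 : Triangle.mk f g h ∈ distTriang C)
    (hT2 : Triangle.mk b b' b'' ∈ distTriang C)
    (hLex1 : LexCond N h) (hLex2 : LexCond N b'')
    {C' : C} (y : B' ⟶ C') (z : C' ⟶ A⟦(1:ℤ)⟧)
    (hT3 : Triangle.mk (f ≫ b) y z ∈ distTriang C) :
    LexCond N z := by
  rw [lexCond_iff_factorsThru_shift] at hLex1 hLex2 ⊢
  intro N₀ hN₀ x
  obtain ⟨d, hd⟩ : ∃ d : C' ⟶ B'', z ≫ f⟦(1:ℤ)⟧' = d ≫ b'' := by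
    obtain ⟨d, -, hd⟩ := complete_distinguished_triangle_morphism _ _ hT3 hT2 f (𝟙 B')
      (Category.comp_id _)
    exact ⟨d, hd⟩
  obtain ⟨_, ⟨Q, hQ, rfl⟩, u, v, huv⟩ := hLex2 N₀ hN₀ (x ≫ d)
  obtain ⟨G, i, j, hU⟩ := distinguished_cocone_triangle₂ u
  obtain ⟨m, hm⟩ : ∃ m : G ⟶ C₀, j ≫ x ≫ z = m ≫ h :=
    Triangle.coyoneda_exact₃ _ (rot_of_distTriang _ hT1) (j ≫ x ≫ z) (by
      change (j ≫ x ≫ z) ≫ (-f⟦(1:ℤ)⟧') = 0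
      have hju : j ≫ u = 0 := comp_distTriang_mor_zero₂₃ _ hU
      rw [Preadditive.comp_neg, neg_eq_zero, Category.assoc, Category.assoc, hd,
        ← Category.assoc x, huv, reassoc_of% hju, zero_comp])
  have hjxz : FactorsThru ((shiftFunctor C (1:ℤ)).obj '' N) (j ≫ x ≫ z) := by
    rw [hm]
    exact hLex1 G (hNext _ hU hQ hN₀) m
  exact factorsThru_shift_of_factorsThru_mor₂_comp N hNext _ hU hQ (x ≫ z) hjxz
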